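/- The 4-braid α_k = (σ1⁻¹σ2^kσ1σ3σ2^{-k}σ3⁻¹)⁴ is not Brunnian for k ≠ 0: the 2-strand braid obtained from α_k by deleting the second and fourth strands equals σ1^{4k}, which is non-trivial. -/

import Mathlib

/-- A braid word on 4 strands: a letter `(i, s)` stands for `σ_{i+1}^{±1}`,
the sign given by `s`. -/
abbrev BraidWord := List (Fin 3 × Bool)

/-- The word `σᵢ^k` for `k ∈ ℤ`. -/
def genPow (i : Fin 3) (k : ℤ) : BraidWord :=
  if 0 ≤ k then List.replicate k.toNat (i, true) else List.replicate (-k).toNat (i, false)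

/-- The word `σ₁⁻¹σ₂^kσ₁σ₃σ₂^{-k}σ₃⁻¹`. -/
def baseWord (k : ℤ) : BraidWord :=
  [((0 : Fin 3), false)] ++ genPow 1 k ++ [((0 : Fin 3), true), ((2 : Fin 3), true)] ++
    genPow 1 (-k) ++ [((2 : Fin 3), false)]

/-- The word of `α_k = (σ₁⁻¹σ₂^kσ₁σ₃σ₂^{-k}σ₃⁻¹)⁴`. -/
def alphaWord (k : ℤ) : BraidWord :=
  baseWord k ++ baseWord k ++ baseWord k ++ baseWord k

/-- One step of the strand-deletion procedure.  The state records which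
positions currently carry a kept strand together with the exponent sum of the
output 2-strand braid word (`B₂ ≅ ℤ`): a crossing `σᵢ^{±1}` contributes `±1`
exactly when both strands at positions `i, i+1` are kept, and in any case it
swaps the two strands at positions `i` and `i+1`. -/
def delStep : (Fin 4 → Bool) × ℤ → Fin 3 × Bool → (Fin 4 → Bool) × ℤ :=
  fun st l =>
    let keep := st.1
    let a := keep l.1.castSucc
    let b := keep l.1.succ
    (fun j => if j = l.1.castSucc then b else if j = l.1.succ then a else keep j,
     if a && b then st.2 + (if l.2 then 1 else -1) else st.2)

/-- The 2-strand braid (as an element of `B₂ ≅ ℤ`) obtained from a 4-strand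
braid word by deleting the second and the fourth strands. -/
def delete24 (w : BraidWord) : ℤ :=
  (w.foldl delStep (![true, false, true, false], 0)).2

lemma step_mid (x y : Bool) (c : ℤ) (b : Bool) :
    delStep (![x, true, true, y], c) ((1 : Fin 3), b) =
    (![x, true, true, y], c + if b then 1 else -1) := by
  refine Prod.ext ?_ ?_
  · funext j; fin_cases j <;> rfl
  · simp only [delStep]
    norm_num
    intro h; exact absurd h Bool.noConfusion

lemma step_mid' (x y : Bool) (c : ℤ) (b : Bool) :
    delStep (![x, false, false, y], c) ((1 : Fin 3), b) =
    (![x, false, false, y], c) := by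
  refine Prod.ext ?_ ?_
  · funext j; fin_cases j <;> rfl
  · simp only [delStep]
    norm_num

lemma rep_mid (x y : Bool) (c : ℤ) (b : Bool) (n : ℕ) :
    (List.replicate n ((1 : Fin 3), b)).foldl delStep (![x, true, true, y], c) =
    (![x, true, true, y], c + n * if b then 1 else -1) := by
  induction n generalizing c with
  | zero => simp
  | succ n ih =>
    rw [List.replicate_succ, List.foldl_cons, step_mid, ih]
    push_cast; ring_nf

lemma rep_mid' (x y : Bool) (c : ℤ) (b : Bool) (n : ℕ) :
    (List.replicate n ((1 : Fin 3), b)).foldl delStep (![x, false, false, y], c) =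
    (![x, false, false, y], c) := by
  induction n with
  | zero => simp
  | succ n ih => rw [List.replicate_succ, List.foldl_cons, step_mid', ih]

lemma genPow_mid (x y : Bool) (c : ℤ) (k : ℤ) :
    (genPow 1 k).foldl delStep (![x, true, true, y], c) = (![x, true, true, y], c + k) := by
  unfold genPow
  split
  · rw [rep_mid]; norm_num; omega
  · rw [rep_mid]; norm_num; omega

lemma genPow_mid' (x y : Bool) (c : ℤ) (k : ℤ) :
    (genPow 1 k).foldl delStep (![x, false, false, y], c) = (![x, false, false, y], c) := by
  unfold genPow
  split <;> rw [rep_mid']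

lemma stepA (c : ℤ) : delStep (![true,false,true,false], c) ((0:Fin 3), false) =
    (![false,true,true,false], c) := by
  refine Prod.ext ?_ ?_
  · funext j; fin_cases j <;> rfl
  · simp only [delStep]; norm_num

lemma stepB (c : ℤ) : delStep (![false,true,true,false], c) ((0:Fin 3), true) =
    (![true,false,true,false], c) := by
  refine Prod.ext ?_ ?_
  · funext j; fin_cases j <;> rfl
  · simp only [delStep]; norm_num

lemma stepC (c : ℤ) : delStep (![true,false,true,false], c) ((2:Fin 3), true) =
    (![true,false,false,true], c) := by
  refine Prod.ext ?_ ?_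
  · funext j; fin_cases j <;> rfl
  · simp only [delStep]; norm_num
    decide

lemma stepD (c : ℤ) : delStep (![true,false,false,true], c) ((2:Fin 3), false) =
    (![true,false,true,false], c) := by
  refine Prod.ext ?_ ?_
  · funext j; fin_cases j <;> rfl
  · simp only [delStep]; norm_num
    decide

lemma base_fold (k c : ℤ) :
    ((baseWord k).foldl delStep (![true,false,true,false], c)) =
    (![true,false,true,false], c + k) := by
  unfold baseWord
  simp only [List.foldl_append, List.foldl_cons, List.foldl_nil]
  rw [stepA, genPow_mid, stepB, stepC, genPow_mid', stepD]

/-- The braid `α_k = (σ₁⁻¹σ₂^kσ₁σ₃σ₂^{-k}σ₃⁻¹)⁴` is not Brunnian for `k ≠ 0`: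
deleting the second and fourth strands yields `σ₁^{4k}`, which is a
non-trivial element of `B₂ ≅ ℤ`. -/
theorem alpha_k_not_Brunnian (k : ℤ) (hk : k ≠ 0) :
    delete24 (alphaWord k) = 4 * k ∧ delete24 (alphaWord k) ≠ 0 := by
  have h : delete24 (alphaWord k) = 4 * k := by
    unfold delete24 alphaWord
    rw [List.foldl_append, List.foldl_append, List.foldl_append,
      base_fold, base_fold, base_fold, base_fold]
    ring
  exact ⟨h, by rw [h]; omega⟩
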